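/- (Optimal isotropy group of Case 2) Let y₀ ∈ ℝ³, y₀ ≠ 0, and let S = J⁻¹(0,0) ∩ M_{G²(y₀)}. Then an element (A,a) ∈ SE(3) satisfies (A,a)·S = S if and only if (Ay₀ = y₀ or Ay₀ = −y₀) and a = η y₀ for some η ∈ ℝ. -/

import Mathlib

/-!
Every point of `S` is fixed by the half-turn about `y₀`, so all four vectors lie on `ℝ y₀`, and
`p¹ + p² = 0`: `S` consists of the points `(α₁ y₀, α₂ y₀, β y₀, -β y₀)` with `β ≠ 0` or `α₁ ≠ α₂`
(otherwise the point is also fixed by rotations about `α₁ y₀` that move `y₀`). If `A y₀ = ε y₀`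
with `ε = ±1` and `a = η y₀`, then `(A, a)` acts on these parameters by an invertible affine map
and so preserves `S`. Conversely, the image `(a, a, A y₀, -A y₀)` of `(0, 0, y₀, -y₀) ∈ S` lies
in `S` only if `a ∈ ℝ y₀` and `A y₀ = β y₀`, where `β = ±1` because `A` is orthogonal.
-/

open Matrix

/-- Vectors in ℝ³. -/
abbrev V3 : Type := Fin 3 → ℝ

/-- The two-body phase space M = ℝ³ × ℝ³ × ℝ³ × ℝ³, points (q¹, q², p¹, p²). -/
abbrev M2B : Type := V3 × V3 × V3 × V3

/-- A 3×3 real matrix is special orthogonal. -/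
def SO3 (A : Matrix (Fin 3) (Fin 3) ℝ) : Prop := Aᵀ * A = 1 ∧ A.det = 1

/-- The action of (A, a) ∈ SE(3) on the phase space:
(A,a)·(q¹,q²,p¹,p²) = (Aq¹+a, Aq²+a, Ap¹, Ap²). -/
def act (A : Matrix (Fin 3) (Fin 3) ℝ) (a : V3) (m : M2B) : M2B :=
  (A *ᵥ m.1 + a, A *ᵥ m.2.1 + a, A *ᵥ m.2.2.1, A *ᵥ m.2.2.2)

/-- The isotropy subgroup SE(3)_{(q,p)} of a point of M, as a set of pairs (A,a)
with A special orthogonal. -/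
def isotropy (m : M2B) : Set (Matrix (Fin 3) (Fin 3) ℝ × V3) :=
  {g | SO3 g.1 ∧ act g.1 g.2 m = m}

/-- The momentum map J(q¹,q²,p¹,p²) = (q¹×p¹ + q²×p², p¹+p²). -/
def Jmom (m : M2B) : V3 × V3 :=
  (m.1 ⨯₃ m.2.2.1 + m.2.1 ⨯₃ m.2.2.2, m.2.2.1 + m.2.2.2)

/-- G¹(x) = {(A,a) ∈ SE(3) : a = x − Ax}. -/
def G1 (x : V3) : Set (Matrix (Fin 3) (Fin 3) ℝ × V3) :=
  {g | SO3 g.1 ∧ g.2 = x - g.1 *ᵥ x}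

/-- G²(y) = {(A,0) ∈ SE(3) : Ay = y}. -/
def G2 (y : V3) : Set (Matrix (Fin 3) (Fin 3) ℝ × V3) :=
  {g | SO3 g.1 ∧ g.1 *ᵥ y = y ∧ g.2 = 0}

/-- G³(x,y) = {(A,a) ∈ SE(3) : Ay = y and a = x − Ax}. -/
def G3 (x y : V3) : Set (Matrix (Fin 3) (Fin 3) ℝ × V3) :=
  {g | SO3 g.1 ∧ g.1 *ᵥ y = y ∧ g.2 = x - g.1 *ᵥ x}

/-- G⁴ = {(I, 0)}, the trivial subgroup. -/
def G4 : Set (Matrix (Fin 3) (Fin 3) ℝ × V3) := {((1 : Matrix (Fin 3) (Fin 3) ℝ), (0 : V3))}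

section HalfTurn

variable {n : Type*} [Fintype n] [DecidableEq n]

/-- The rotation by π about the axis `ℝ y`. -/
noncomputable def halfTurn (y : n → ℝ) : Matrix n n ℝ :=
  (2 / (y ⬝ᵥ y)) • vecMulVec y y - 1

lemma halfTurn_mulVec (y v : n → ℝ) :
    halfTurn y *ᵥ v = (2 / (y ⬝ᵥ y) * (y ⬝ᵥ v)) • y - v := by
  rw [halfTurn, sub_mulVec, smul_mulVec, vecMulVec_mulVec, one_mulVec, op_smul_eq_smul, smul_smul]

lemma transpose_halfTurn (y : n → ℝ) : (halfTurn y)ᵀ = halfTurn y := by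
  rw [halfTurn, transpose_sub, transpose_one, transpose_smul, transpose_vecMulVec]

lemma halfTurn_mul_self {y : n → ℝ} (hy : y ≠ 0) : halfTurn y * halfTurn y = 1 := by
  have hd : y ⬝ᵥ y ≠ 0 := fun h => hy (dotProduct_self_eq_zero.mp h)
  have hP : vecMulVec y y * vecMulVec y y = (y ⬝ᵥ y) • vecMulVec y y := by
    rw [vecMulVec_mul_vecMulVec, vecMulVec_smul]
  simp only [halfTurn, sub_mul, mul_sub, hP, smul_smul, one_mul, mul_one, smul_mul_assoc,
    mul_smul_comm]
  rw [div_mul_cancel₀ _ hd]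
  module

lemma halfTurn_mulVec_self {y : n → ℝ} (hy : y ≠ 0) : halfTurn y *ᵥ y = y := by
  have hd : y ⬝ᵥ y ≠ 0 := fun h => hy (dotProduct_self_eq_zero.mp h)
  rw [halfTurn_mulVec, div_mul_cancel₀ _ hd]
  module

lemma exists_eq_smul_of_halfTurn_mulVec_eq {y v : n → ℝ} (h : halfTurn y *ᵥ v = v) :
    ∃ c : ℝ, v = c • y := by
  refine ⟨(y ⬝ᵥ v) / (y ⬝ᵥ y), ?_⟩
  rw [halfTurn_mulVec, sub_eq_iff_eq_add, ← two_smul ℝ v] at h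
  calc v = (2 : ℝ)⁻¹ • (2 : ℝ) • v := by module
    _ = _ := by rw [← h, smul_smul]; congr 1; ring

end HalfTurn

lemma det_halfTurn {y : Fin 3 → ℝ} (hy : y ≠ 0) : (halfTurn y).det = 1 := by
  have hd : y ⬝ᵥ y ≠ 0 := fun h => hy (dotProduct_self_eq_zero.mp h)
  have hneg : halfTurn y =
      -(1 + replicateCol Unit (-(2 / (y ⬝ᵥ y)) • y) * replicateRow Unit y) := by
    rw [← vecMulVec_eq, halfTurn, smul_vecMulVec, neg_smul, neg_add, neg_neg, sub_eq_neg_add,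
      add_comm]
  rw [hneg, det_neg, det_one_add_replicateCol_mul_replicateRow, dotProduct_smul, smul_eq_mul,
    neg_mul, div_mul_cancel₀ _ hd]
  norm_num

lemma so3_halfTurn {y : V3} (hy : y ≠ 0) : SO3 (halfTurn y) :=
  ⟨by rw [transpose_halfTurn, halfTurn_mul_self hy], det_halfTurn hy⟩

lemma exists_so3_mulVec_ne {y : V3} (hy : y ≠ 0) : ∃ B, SO3 B ∧ B *ᵥ y ≠ y := by
  obtain ⟨i, hi⟩ := Function.ne_iff.mp hy
  refine ⟨diagonal (fun k => if k = i + 1 then 1 else -1), ⟨?_, ?_⟩, ?_⟩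
  · rw [diagonal_transpose, diagonal_mul_diagonal, ← diagonal_one]
    congr 1
    ext k
    split_ifs <;> norm_num
  · rw [det_diagonal, Fin.prod_univ_three]
    fin_cases i <;> norm_num [Fin.ext_iff, Fin.add_def]
  · intro h
    have hii := congrFun h i
    have hne : i ≠ i + 1 := by fin_cases i <;> decide
    rw [mulVec_diagonal, if_neg hne] at hii
    exact hi (by simp only [Pi.zero_apply]; linarith)

lemma eq_one_or_eq_neg_one_of_mulVec_eq_smul {n : Type*} [Fintype n] [DecidableEq n]
    {A : Matrix n n ℝ} (hA : Aᵀ * A = 1) {y : n → ℝ} (hy : y ≠ 0) {β : ℝ} (h : A *ᵥ y = β • y) :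
    β = 1 ∨ β = -1 := by
  have hd : y ⬝ᵥ y ≠ 0 := fun h => hy (dotProduct_self_eq_zero.mp h)
  have hnorm : (A *ᵥ y) ⬝ᵥ (A *ᵥ y) = y ⬝ᵥ y := by
    rw [dotProduct_mulVec, ← mulVec_transpose, mulVec_mulVec, hA, one_mulVec]
  rw [h, smul_dotProduct, dotProduct_smul, smul_smul, smul_eq_mul] at hnorm
  exact mul_self_eq_one_iff.mp (mul_right_cancel₀ hd (hnorm.trans (one_mul _).symm))

def collinearPoint (y : V3) (α₁ α₂ β : ℝ) : M2B :=
  (α₁ • y, α₂ • y, β • y, (-β) • y)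

/-- `J⁻¹(0,0) ∩ M_{G²(y)}`. -/
def zeroMomentumStratum (y : V3) : Set M2B :=
  {m | Jmom m = (0, 0) ∧ isotropy m = G2 y}

lemma act_collinearPoint {A : Matrix (Fin 3) (Fin 3) ℝ} {y : V3} {ε : ℝ} (h : A *ᵥ y = ε • y)
    (η α₁ α₂ β : ℝ) :
    act A (η • y) (collinearPoint y α₁ α₂ β) =
      collinearPoint y (ε * α₁ + η) (ε * α₂ + η) (ε * β) := by
  simp only [act, collinearPoint, mulVec_smul, h, smul_smul, Prod.mk.injEq]
  refine ⟨?_, ?_, ?_, ?_⟩ <;> module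

lemma jmom_collinearPoint (y : V3) (α₁ α₂ β : ℝ) : Jmom (collinearPoint y α₁ α₂ β) = (0, 0) := by
  simp only [Jmom, collinearPoint, LinearMap.map_smul, LinearMap.smul_apply, cross_self,
    smul_zero, add_zero, Prod.mk.injEq, true_and]
  module

lemma isotropy_collinearPoint {y : V3} {α₁ α₂ β : ℝ} (hne : β ≠ 0 ∨ α₁ ≠ α₂) :
    isotropy (collinearPoint y α₁ α₂ β) = G2 y := by
  ext ⟨B, b⟩
  simp only [isotropy, G2, Set.mem_ofPred_eq, and_congr_right_iff]
  intro _
  constructor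
  · intro hfix
    simp only [act, collinearPoint, mulVec_smul, Prod.mk.injEq] at hfix
    obtain ⟨h₁, h₂, h₃, -⟩ := hfix
    have hBy : B *ᵥ y = y := by
      rcases hne with hβ | hα
      · exact smul_right_injective V3 hβ h₃
      · refine smul_right_injective V3 (sub_ne_zero.mpr hα) ?_
        simp only [sub_smul]
        rw [← h₁, ← h₂]
        abel
    refine ⟨hBy, ?_⟩
    rw [hBy] at h₁
    exact add_eq_left.mp h₁
  · rintro ⟨hBy, rfl⟩
    simpa using act_collinearPoint (ε := 1) (by rw [hBy, one_smul]) 0 α₁ α₂ β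

lemma mem_zeroMomentumStratum_iff {y : V3} (hy : y ≠ 0) {m : M2B} :
    m ∈ zeroMomentumStratum y ↔
      ∃ α₁ α₂ β : ℝ, (β ≠ 0 ∨ α₁ ≠ α₂) ∧ m = collinearPoint y α₁ α₂ β := by
  constructor
  · rintro ⟨hJ, hiso⟩
    obtain ⟨q₁, q₂, p₁, p₂⟩ := m
    have hturn : (halfTurn y, (0 : V3)) ∈ isotropy (q₁, q₂, p₁, p₂) := by
      rw [hiso]; exact ⟨so3_halfTurn hy, halfTurn_mulVec_self hy, rfl⟩
    simp only [isotropy, act, add_zero, Set.mem_ofPred_eq, Prod.mk.injEq] at hturn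
    obtain ⟨-, h₁, h₂, h₃, -⟩ := hturn
    obtain ⟨α₁, rfl⟩ := exists_eq_smul_of_halfTurn_mulVec_eq h₁
    obtain ⟨α₂, rfl⟩ := exists_eq_smul_of_halfTurn_mulVec_eq h₂
    obtain ⟨β, rfl⟩ := exists_eq_smul_of_halfTurn_mulVec_eq h₃
    have hp : p₂ = (-β) • y := by
      rw [neg_smul]
      exact (neg_eq_of_add_eq_zero_right (congrArg Prod.snd hJ)).symm
    subst hp
    change isotropy (collinearPoint y α₁ α₂ β) = G2 y at hiso
    refine ⟨α₁, α₂, β, ?_, rfl⟩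
    by_contra! hdeg
    obtain ⟨rfl, rfl⟩ := hdeg
    -- Two bodies at rest at the same point `x` are fixed by every rotation about `x`.
    obtain ⟨B, hB, hBy⟩ := exists_so3_mulVec_ne hy
    have hfix : (B, α₁ • y - B *ᵥ (α₁ • y)) ∈ isotropy (collinearPoint y α₁ α₁ 0) := by
      refine ⟨hB, ?_⟩
      simp only [act, collinearPoint, neg_zero, zero_smul, mulVec_zero, add_sub_cancel]
    rw [hiso] at hfix
    exact hBy hfix.2.1
  · rintro ⟨α₁, α₂, β, hne, rfl⟩
    exact ⟨jmom_collinearPoint y α₁ α₂ β, isotropy_collinearPoint hne⟩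

lemma act_image_zeroMomentumStratum {A : Matrix (Fin 3) (Fin 3) ℝ} {y : V3} (hy : y ≠ 0)
    {ε : ℝ} (hε : ε * ε = 1) (hA : A *ᵥ y = ε • y) (η : ℝ) :
    act A (η • y) '' zeroMomentumStratum y = zeroMomentumStratum y := by
  have hε₀ : ε ≠ 0 := left_ne_zero_of_mul_eq_one hε
  have hnondeg : ∀ {α₁ α₂ β : ℝ} (ζ : ℝ), (β ≠ 0 ∨ α₁ ≠ α₂) →
      (ε * β ≠ 0 ∨ ε * α₁ + ζ ≠ ε * α₂ + ζ) := by
    rintro α₁ α₂ β ζ (hβ | hα)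
    · exact Or.inl (mul_ne_zero hε₀ hβ)
    · exact Or.inr fun h => hα (mul_left_cancel₀ hε₀ (add_right_cancel h))
  ext m
  simp only [Set.mem_image, mem_zeroMomentumStratum_iff hy]
  constructor
  · rintro ⟨_, ⟨α₁, α₂, β, hne, rfl⟩, rfl⟩
    exact ⟨_, _, _, hnondeg η hne, act_collinearPoint hA η α₁ α₂ β⟩
  · rintro ⟨α₁, α₂, β, hne, rfl⟩
    refine ⟨collinearPoint y (ε * α₁ + -(ε * η)) (ε * α₂ + -(ε * η)) (ε * β),
      ⟨_, _, _, hnondeg _ hne, rfl⟩, ?_⟩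
    rw [act_collinearPoint hA]
    congr 1
    · linear_combination (α₁ - η) * hε
    · linear_combination (α₂ - η) * hε
    · linear_combination β * hε

theorem stmt9 (y0 : V3) (hy : y0 ≠ 0) (A : Matrix (Fin 3) (Fin 3) ℝ) (a : V3)
    (hA : SO3 A) :
    act A a '' {m : M2B | Jmom m = (0, 0) ∧ isotropy m = G2 y0} =
        {m : M2B | Jmom m = (0, 0) ∧ isotropy m = G2 y0} ↔
      ((A *ᵥ y0 = y0 ∨ A *ᵥ y0 = -y0) ∧ ∃ η : ℝ, a = η • y0) := by
  change act A a '' zeroMomentumStratum y0 = zeroMomentumStratum y0 ↔ _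
  constructor
  · intro hS
    have hm : collinearPoint y0 0 0 1 ∈ zeroMomentumStratum y0 :=
      (mem_zeroMomentumStratum_iff hy).mpr ⟨0, 0, 1, Or.inl one_ne_zero, rfl⟩
    obtain ⟨α₁, α₂, β, -, himg⟩ :=
      (mem_zeroMomentumStratum_iff hy).mp (hS ▸ Set.mem_image_of_mem (act A a) hm)
    simp only [act, collinearPoint, zero_smul, mulVec_zero, zero_add, one_smul,
      Prod.mk.injEq] at himg
    obtain ⟨ha, -, hAy, -⟩ := himg
    refine ⟨?_, α₁, ha⟩
    rcases eq_one_or_eq_neg_one_of_mulVec_eq_smul hA.1 hy hAy with rfl | rfl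
    · exact Or.inl (hAy.trans (one_smul ℝ y0))
    · exact Or.inr (hAy.trans (neg_one_smul ℝ y0))
  · rintro ⟨hAy | hAy, η, rfl⟩
    · exact act_image_zeroMomentumStratum hy (one_mul 1) (hAy.trans (one_smul ℝ y0).symm) η
    · exact act_image_zeroMomentumStratum hy (by norm_num)
        (hAy.trans (neg_one_smul ℝ y0).symm) η
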